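/- The maximum size of a set of mutually unbiased weighing matrices of order 8 and weight 4 is 14; that is, there exist 14 pairwise unbiased weighing matrices of order 8 and weight 4, and there do not exist 15 pairwise unbiased weighing matrices of order 8 and weight 4. -/

import Mathlib

/-!
Reduce the rows of a family of mutually unbiased weighing matrices of order 8 and weight 4 to
integer vectors: they are ternary, of weight 4, and distinct rows have inner product in
{-2, 0, 2}. Their supports, read mod 2, are therefore pairwise orthogonal words of weight 4 in
𝔽₂⁸. They span a self-orthogonal code, of dimension at most 4; it cannot consist of 15 nonzero
words of weight 4, because in a binary linear code each coordinate is 1 in either no word or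
exactly half of them, so 16 would divide 2 · 60. Hence there are at most 14 supports. Rows
sharing a support are not equal up to sign (their inner product would be ±4), so each support
carries at most 2³ rows, and 15 matrices would give 120 > 14 · 8 rows. The bound is attained
by an explicit family built on the extended Hamming code.
-/

open Matrix

/-- `W` is a weighing matrix of order `d` and weight `k`: a `d × d` real matrix with all
entries in `{-1, 0, 1}` such that `W * Wᵀ = k • 1`. -/
def IsWeighing {d : ℕ} (k : ℝ) (W : Matrix (Fin d) (Fin d) ℝ) : Prop :=
  (∀ i j, W i j = -1 ∨ W i j = 0 ∨ W i j = 1) ∧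
    W * Wᵀ = k • (1 : Matrix (Fin d) (Fin d) ℝ)

/-- A family of mutually unbiased weighing matrices of order `d` and weight `k`:
each member is a weighing matrix of weight `k`, and for distinct members
`(1/√k) • (Wᵢ * Wⱼᵀ)` is again a weighing matrix of weight `k`. -/
def MUWM {d f : ℕ} (k : ℝ) (W : Fin f → Matrix (Fin d) (Fin d) ℝ) : Prop :=
  (∀ i, IsWeighing k (W i)) ∧
    ∀ i j, i ≠ j → IsWeighing k ((Real.sqrt k)⁻¹ • (W i * (W j)ᵀ))

/-- A family of mutually quasi-unbiased weighing matrices for parameters `(d, k, l, a)`: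
each member is a weighing matrix of weight `k`, and for distinct members
`(1/√a) • (Wᵢ * Wⱼᵀ)` is a weighing matrix of weight `l`. -/
def MQUWM {d f : ℕ} (k l a : ℝ) (W : Fin f → Matrix (Fin d) (Fin d) ℝ) : Prop :=
  (∀ i, IsWeighing k (W i)) ∧
    ∀ i j, i ≠ j → IsWeighing l ((Real.sqrt a)⁻¹ • (W i * (W j)ᵀ))

open Finset

abbrev IsTernary {R : Type*} [Ring R] (x : R) : Prop := x = -1 ∨ x = 0 ∨ x = 1

theorem IsTernary.intCast {R : Type*} [Ring R] {z : ℤ} (hz : IsTernary z) :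
    IsTernary (z : R) := by
  rcases hz with rfl | rfl | rfl <;> simp [IsTernary]

theorem IsTernary.exists_intCast_eq {x : ℝ} (hx : IsTernary x) :
    ∃ z : ℤ, IsTernary z ∧ (z : ℝ) = x := by
  rcases hx with rfl | rfl | rfl
  exacts [⟨-1, by simp [IsTernary]⟩, ⟨0, by simp [IsTernary]⟩, ⟨1, by simp [IsTernary]⟩]

theorem IsTernary.intCast_zmod_two_eq_zero_iff {z : ℤ} (hz : IsTernary z) :
    (z : ZMod 2) = 0 ↔ z = 0 := by
  rcases hz with rfl | rfl | rfl <;> decide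

theorem dotProduct_self_eq_hammingNorm {n : Type*} [Fintype n] {v : n → ℤ}
    (hv : ∀ k, IsTernary (v k)) : v ⬝ᵥ v = hammingNorm v := by
  rw [dotProduct, hammingNorm, card_filter]
  push_cast
  refine sum_congr rfl fun k _ => ?_
  rcases hv k with h | h | h <;> simp [h]

section BinaryCodes

variable {n : Type*}

theorem dotProduct_eq_zero_of_mem_span [Fintype n] {K : Type*} [Field K] {T : Set (n → K)}
    (hT : ∀ s ∈ T, ∀ t ∈ T, s ⬝ᵥ t = 0) {x y : n → K}
    (hx : x ∈ Submodule.span K T) (hy : y ∈ Submodule.span K T) : x ⬝ᵥ y = 0 := by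
  induction hx, hy using Submodule.span_induction₂ with
  | mem_mem s t hs ht => exact hT s hs t ht
  | zero_left => simp
  | zero_right => simp
  | add_left _ _ _ _ _ _ h₁ h₂ => simp [add_dotProduct, h₁, h₂]
  | add_right _ _ _ _ _ _ h₁ h₂ => simp [dotProduct_add, h₁, h₂]
  | smul_left _ _ _ _ _ h => simp [smul_dotProduct, h]
  | smul_right _ _ _ _ _ h => simp [dotProduct_smul, h]

theorem two_mul_finrank_le_of_isotropic [Fintype n] [DecidableEq n] {K : Type*} [Field K]
    {C : Submodule K (n → K)} (hC : ∀ x ∈ C, ∀ y ∈ C, x ⬝ᵥ y = 0) :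
    2 * Module.finrank K C ≤ Fintype.card n := by
  set B := (1 : Matrix n n K).toBilin'
  have hB : B.Nondegenerate :=
    LinearMap.BilinForm.nondegenerate_toBilin'_of_det_ne_zero' _ (by simp)
  have hle : C ≤ B.orthogonal C := fun x hx y hy => by
    simp [B, Matrix.toBilin'_apply', hC y hy x hx]
  have := Submodule.finrank_mono hle
  rw [LinearMap.BilinForm.finrank_orthogonal hB, Module.finrank_fintype_fun_eq_card] at this
  omega

theorem card_dvd_two_mul_card_filter_ne_zero (C : Submodule (ZMod 2) (n → ZMod 2)) [Fintype C]
    (k : n) : Fintype.card C ∣ 2 * #{x : C | (x : n → ZMod 2) k ≠ 0} := by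
  classical
  let φ : C →+ ZMod 2 := (LinearMap.proj k ∘ₗ C.subtype).toAddMonoidHom
  have hφ : ∀ x : C, φ x = (x : n → ZMod 2) k := fun _ => rfl
  have hne : ∀ a : ZMod 2, a ≠ 0 ↔ a = 1 := by decide
  simp only [hne, ← hφ]
  by_cases h : ∃ x : C, φ x = 1
  · have hfib :=
      AddMonoidHom.card_fiber_eq_of_mem_range φ (Set.mem_range.2 h) ⟨0, map_zero φ⟩
    have hsplit := card_filter_add_card_filter_not (s := univ) (fun x : C => φ x = 1)
    have hnot : #{x : C | ¬φ x = 1} = #{x : C | φ x = 0} := by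
      simp only [← hne, not_not]
    rw [hnot, ← hfib, card_univ] at hsplit
    exact ⟨1, by omega⟩
  · push Not at h
    simp [h]

theorem card_dvd_two_mul_sum_hammingNorm [Fintype n] (C : Submodule (ZMod 2) (n → ZMod 2))
    [Fintype C] : Fintype.card C ∣ 2 * ∑ x : C, hammingNorm (x : n → ZMod 2) := by
  have hswap : ∑ x : C, hammingNorm (x : n → ZMod 2) =
      ∑ k, #{x : C | (x : n → ZMod 2) k ≠ 0} := by
    simp only [hammingNorm, card_filter]
    exact sum_comm
  rw [hswap, mul_sum]
  exact dvd_sum fun k _ => card_dvd_two_mul_card_filter_ne_zero C k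

end BinaryCodes

theorem card_le_fourteen_of_selfOrthogonal {T : Finset (Fin 8 → ZMod 2)}
    (hwt : ∀ t ∈ T, hammingNorm t = 4) (horth : ∀ s ∈ T, ∀ t ∈ T, s ⬝ᵥ t = 0) :
    #T ≤ 14 := by
  classical
  set C := Submodule.span (ZMod 2) (T : Set (Fin 8 → ZMod 2))
  have hC : Fintype.card C ≤ 16 := by
    have := two_mul_finrank_le_of_isotropic (C := C) fun x hx y hy =>
      dotProduct_eq_zero_of_mem_span horth hx hy
    rw [Fintype.card_fin] at this
    rw [Module.card_eq_pow_finrank (K := ZMod 2), ZMod.card]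
    calc 2 ^ Module.finrank (ZMod 2) C ≤ 2 ^ 4 := Nat.pow_le_pow_right two_pos (by omega)
      _ = 16 := rfl
  by_contra! hT
  have h0 : (0 : Fin 8 → ZMod 2) ∉ T := fun h => by simpa using hwt 0 h
  set Cf : Finset (Fin 8 → ZMod 2) := {x | x ∈ C}
  have hsub : insert 0 T ⊆ Cf := by
    intro x hx
    rw [mem_filter_univ]
    rcases mem_insert.1 hx with rfl | hx
    exacts [C.zero_mem, Submodule.subset_span hx]
  have hcardC : Fintype.card C = #Cf := Fintype.card_subtype _
  have heq : insert 0 T = Cf :=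
    eq_of_subset_of_card_le hsub (by rw [card_insert_of_notMem h0]; omega)
  have hsum : ∑ x : C, hammingNorm (x : Fin 8 → ZMod 2) = 4 * #T := by
    rw [← sum_subtype (insert 0 T) (p := (· ∈ C)) fun x => by rw [heq, mem_filter_univ],
      sum_insert h0, sum_congr rfl hwt]
    simp [mul_comm]
  have hcardT : #T + 1 = 16 := by
    have := card_insert_of_notMem h0
    rw [heq, ← hcardC] at this
    omega
  have hdvd := card_dvd_two_mul_sum_hammingNorm C
  rw [hsum, hcardC, ← heq, card_insert_of_notMem h0, hcardT] at hdvd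
  omega

theorem Int.eq_mul_mul_of_eq_iff_eq {a b c d : ℤ} (ha : a = -1 ∨ a = 1) (hb : b = -1 ∨ b = 1)
    (hc : c = -1 ∨ c = 1) (hd : d = -1 ∨ d = 1) (h : a = b ↔ c = d) : a = b * d * c := by
  rcases ha with rfl | rfl <;> rcases hb with rfl | rfl <;> rcases hc with rfl | rfl <;>
    rcases hd with rfl | rfl <;> simp_all

theorem card_le_two_pow_of_support_eq {ι n : Type*} [DecidableEq n] {r : ι → n → ℤ}
    {s : Finset ι} {S : Finset n} (hr : ∀ x ∈ s, ∀ k, IsTernary (r x k))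
    (hS : ∀ x ∈ s, ∀ k, r x k ≠ 0 ↔ k ∈ S)
    (hsign : ∀ x ∈ s, ∀ y ∈ s, r x = r y ∨ r x = -r y → x = y) : #s ≤ 2 ^ (#S - 1) := by
  have hzero : ∀ x ∈ s, ∀ k ∉ S, r x k = 0 := fun x hx k hk => not_not.1 (mt (hS x hx k).1 hk)
  have hunit : ∀ x ∈ s, ∀ k ∈ S, r x k = -1 ∨ r x k = 1 := fun x hx k hk => by
    have := (hS x hx k).2 hk
    rcases hr x hx k with h | h | h <;> simp_all
  rcases S.eq_empty_or_nonempty with rfl | ⟨k₀, hk₀⟩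
  · refine card_le_one.2 fun x hx y hy => hsign x hx y hy (.inl ?_)
    funext k
    rw [hzero x hx k (notMem_empty k), hzero y hy k (notMem_empty k)]
  -- up to sign, a row is determined by which of its entries agree with its entry at `k₀`
  let pattern : ι → Finset n := fun x => {k ∈ S.erase k₀ | r x k = r x k₀}
  have hinj : Set.InjOn pattern s := by
    intro x hx y hy hxy
    have hprop : ∀ k, r x k = r x k₀ * r y k₀ * r y k := by
      intro k
      by_cases hk : k ∈ S
      · refine Int.eq_mul_mul_of_eq_iff_eq (hunit x hx k hk) (hunit x hx k₀ hk₀)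
          (hunit y hy k hk) (hunit y hy k₀ hk₀) ?_
        by_cases hkk : k = k₀
        · simp [hkk]
        · simpa [pattern, hk, hkk] using congrArg (k ∈ ·) hxy
      · simp [hzero x hx k hk, hzero y hy k hk]
    apply hsign x hx y hy
    rcases hunit x hx k₀ hk₀ with h₁ | h₁ <;> rcases hunit y hy k₀ hk₀ with h₂ | h₂ <;>
      simp only [h₁, h₂] at hprop <;> simp [funext_iff, hprop]
  calc #s ≤ #(S.erase k₀).powerset :=
        card_le_card_of_injOn pattern (fun x _ => mem_powerset.2 (filter_subset _ _)) hinj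
    _ = 2 ^ (#S - 1) := by rw [card_powerset, card_erase_of_mem hk₀]

theorem card_le_112_of_dotProduct_mem {ι : Type*} [Fintype ι] {r : ι → Fin 8 → ℤ}
    (hr : ∀ x k, IsTernary (r x k)) (hnorm : ∀ x, r x ⬝ᵥ r x = 4)
    (hdot : ∀ x y, x ≠ y → r x ⬝ᵥ r y ∈ ({-2, 0, 2} : Finset ℤ)) :
    Fintype.card ι ≤ 112 := by
  classical
  let u : ι → Fin 8 → ZMod 2 := fun x k => (r x k : ZMod 2)
  have hu : ∀ x k, u x k = 0 ↔ r x k = 0 := fun x k => (hr x k).intCast_zmod_two_eq_zero_iff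
  have hwt : ∀ x, hammingNorm (u x) = 4 := fun x => by
    have := dotProduct_self_eq_hammingNorm (hr x)
    rw [hnorm] at this
    simp only [hammingNorm, ne_eq, hu]
    exact_mod_cast this.symm
  have horth : ∀ x y, u x ⬝ᵥ u y = 0 := fun x y => by
    have hcast : u x ⬝ᵥ u y = ((r x ⬝ᵥ r y : ℤ) : ZMod 2) := by simp [u, dotProduct]
    rw [hcast]
    by_cases hxy : x = y
    · rw [hxy, hnorm]; decide
    · have := hdot x y hxy
      simp only [mem_insert, mem_singleton] at this
      rcases this with h | h | h <;> rw [h] <;> decide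
  have hT : #(univ.image u) ≤ 14 :=
    card_le_fourteen_of_selfOrthogonal (by simp [hwt]) (by simp [horth])
  have hfiber : ∀ t ∈ univ.image u, #{x | u x = t} ≤ 8 := by
    intro t ht
    obtain ⟨x₀, -, rfl⟩ := mem_image.1 ht
    have hS : ∀ x ∈ ({x | u x = u x₀} : Finset ι), ∀ k,
        r x k ≠ 0 ↔ k ∈ ({k | u x₀ k ≠ 0} : Finset (Fin 8)) := by
      intro x hx k
      rw [mem_filter_univ] at hx
      simp only [mem_filter_univ, ← hx, ne_eq, hu]
    have hsign : ∀ x ∈ ({x | u x = u x₀} : Finset ι), ∀ y ∈ ({x | u x = u x₀} : Finset ι),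
        r x = r y ∨ r x = -r y → x = y := by
      intro x _ y _ h
      by_contra hxy
      have := hdot x y hxy
      rcases h with h | h <;> simp [h, neg_dotProduct, hnorm] at this
    have hcard := card_le_two_pow_of_support_eq (fun x _ k => hr x k) hS hsign
    rwa [show #({k | u x₀ k ≠ 0} : Finset (Fin 8)) = 4 from hwt x₀] at hcard
  have := card_le_mul_card_image univ 8 hfiber
  rw [card_univ] at this
  omega

section Gram

variable {n : Type*} [Fintype n] [DecidableEq n]

theorem transpose_mul_self_eq_smul_one {k : ℝ} (hk : k ≠ 0) {B : Matrix n n ℝ}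
    (hB : B * Bᵀ = k • 1) : Bᵀ * B = k • 1 := by
  have h : B * (k⁻¹ • Bᵀ) = 1 := by
    rw [Matrix.mul_smul, hB, smul_smul, inv_mul_cancel₀ hk, one_smul]
  rw [← smul_inv_smul₀ hk (Bᵀ * B), ← Matrix.smul_mul, mul_eq_one_comm.1 h]

theorem gram_inv_sqrt_smul_mul_transpose {k : ℝ} (hk : 0 < k) {A B : Matrix n n ℝ}
    (hA : A * Aᵀ = k • 1) (hB : B * Bᵀ = k • 1) :
    ((√k)⁻¹ • (A * Bᵀ)) * ((√k)⁻¹ • (A * Bᵀ))ᵀ = k • 1 := by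
  calc ((√k)⁻¹ • (A * Bᵀ)) * ((√k)⁻¹ • (A * Bᵀ))ᵀ
      = ((√k)⁻¹ * (√k)⁻¹) • (A * (Bᵀ * B) * Aᵀ) := by
        rw [transpose_smul, transpose_mul, transpose_transpose, smul_mul_smul_comm,
          Matrix.mul_assoc, Matrix.mul_assoc, Matrix.mul_assoc]
    _ = k • 1 := by
        rw [transpose_mul_self_eq_smul_one hk.ne' hB, Matrix.mul_smul, Matrix.mul_one,
          Matrix.smul_mul, hA, smul_smul, smul_smul, ← mul_inv, Real.mul_self_sqrt hk.le,
          inv_mul_cancel₀ hk.ne', one_mul]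

end Gram

theorem MUWM.of_isTernary {d f : ℕ} {k : ℝ} (hk : 0 < k)
    {W : Fin f → Matrix (Fin d) (Fin d) ℝ} (hW : ∀ a, IsWeighing k (W a))
    (hWW : ∀ a b, a ≠ b → ∀ i j, IsTernary (((√k)⁻¹ • (W a * (W b)ᵀ)) i j)) : MUWM k W :=
  ⟨hW, fun a b hab => ⟨hWW a b hab, gram_inv_sqrt_smul_mul_transpose hk (hW a).2 (hW b).2⟩⟩

theorem Matrix.exists_map_intCast_eq {m n : Type*} {W : Matrix m n ℝ}
    (hW : ∀ i j, IsTernary (W i j)) :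
    ∃ Z : Matrix m n ℤ, (∀ i j, IsTernary (Z i j)) ∧ Z.map (Int.cast : ℤ → ℝ) = W := by
  choose Z hZ hZW using fun i j => (hW i j).exists_intCast_eq
  exact ⟨Z, hZ, Matrix.ext hZW⟩

theorem Matrix.map_intCast_mul_transpose {m n : Type*} [Fintype n] (Z Z' : Matrix m n ℤ) :
    Z.map (Int.cast : ℤ → ℝ) * (Z'.map (Int.cast : ℤ → ℝ))ᵀ = (Z * Z'ᵀ).map Int.cast := by
  rw [← transpose_map]
  exact (Matrix.map_mul (f := Int.castRingHom ℝ)).symm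

theorem isWeighing_map_intCast_iff {d : ℕ} {Z : Matrix (Fin d) (Fin d) ℤ}
    (hZ : ∀ i j, IsTernary (Z i j)) (k : ℤ) :
    IsWeighing (k : ℝ) (Z.map Int.cast) ↔ Z * Zᵀ = k • 1 := by
  have hk : (k : ℝ) • (1 : Matrix (Fin d) (Fin d) ℝ) =
      (k • 1 : Matrix (Fin d) (Fin d) ℤ).map Int.cast := by
    ext i j
    simp only [map_apply, Matrix.smul_apply, one_apply, smul_eq_mul]
    split_ifs <;> simp
  rw [IsWeighing, map_intCast_mul_transpose, hk, (Matrix.map_injective Int.cast_injective).eq_iff]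
  exact and_iff_right fun i j => (hZ i j).intCast

theorem isTernary_inv_two_mul_intCast_iff (z : ℤ) :
    IsTernary (2⁻¹ * (z : ℝ)) ↔ z ∈ ({-2, 0, 2} : Finset ℤ) := by
  simp only [IsTernary, inv_mul_eq_iff_eq_mul₀ (two_ne_zero' ℝ), mem_insert, mem_singleton]
  norm_num
  norm_cast

theorem muwm_map_intCast_iff {d f : ℕ} {Z : Fin f → Matrix (Fin d) (Fin d) ℤ}
    (hZ : ∀ a i j, IsTernary (Z a i j)) :
    MUWM 4 (fun a => (Z a).map (Int.cast : ℤ → ℝ)) ↔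
      (∀ a, Z a * (Z a)ᵀ = 4 • 1) ∧
        ∀ a b, a ≠ b → ∀ i j, (Z a * (Z b)ᵀ) i j ∈ ({-2, 0, 2} : Finset ℤ) := by
  have hW : ∀ a, IsWeighing 4 ((Z a).map (Int.cast : ℤ → ℝ)) ↔ Z a * (Z a)ᵀ = 4 • 1 :=
    fun a => by simpa using isWeighing_map_intCast_iff (hZ a) 4
  have hentry : ∀ a b i j,
      ((√4 : ℝ)⁻¹ • ((Z a).map (Int.cast : ℤ → ℝ) * ((Z b).map Int.cast)ᵀ) :
        Matrix (Fin d) (Fin d) ℝ) i j =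
      2⁻¹ * (((Z a * (Z b)ᵀ) i j : ℤ) : ℝ) := fun a b i j => by
    rw [map_intCast_mul_transpose, Matrix.smul_apply, map_apply, smul_eq_mul,
      show √(4 : ℝ) = 2 by simp [show (4 : ℝ) = 2 ^ 2 by norm_num]]
  constructor
  · intro hmuwm
    refine ⟨fun a => (hW a).1 (hmuwm.1 a), fun a b hab i j => ?_⟩
    rw [← isTernary_inv_two_mul_intCast_iff, ← hentry]
    exact (hmuwm.2 a b hab).1 i j
  · rintro ⟨hgram, hcross⟩
    refine MUWM.of_isTernary four_pos (fun a => (hW a).2 (hgram a)) fun a b hab i j => ?_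
    rw [hentry, isTernary_inv_two_mul_intCast_iff]
    exact hcross a b hab i j

theorem MUWM.le_fourteen {f : ℕ} {W : Fin f → Matrix (Fin 8) (Fin 8) ℝ} (hW : MUWM 4 W) :
    f ≤ 14 := by
  choose Z hZ hZW using fun a => exists_map_intCast_eq (hW.1 a).1
  obtain rfl : W = fun a => (Z a).map Int.cast := funext fun a => (hZW a).symm
  obtain ⟨hgram, hcross⟩ := (muwm_map_intCast_iff hZ).1 hW
  have hdot : ∀ a b i j, Z a i ⬝ᵥ Z b j = (Z a * (Z b)ᵀ) i j := fun _ _ _ _ => rfl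
  have hrows := card_le_112_of_dotProduct_mem (r := fun x : Fin f × Fin 8 => Z x.1 x.2)
    (fun _ _ => hZ _ _ _) (fun _ => by simp [hdot, hgram]) <| by
      rintro ⟨a, i⟩ ⟨b, j⟩ hne
      by_cases hab : a = b
      · subst hab
        have hij : i ≠ j := fun h => hne (by rw [h])
        simp [hdot, hgram, hij]
      · exact hcross a b hab i j
  simp only [Fintype.card_prod, Fintype.card_fin] at hrows
  omega

/- Matrix `2p` carries the Sylvester Hadamard matrix `H₄` on the columns of the `p`-th weight-4
word of the extended Hamming code (rows 0–3) and on those of its complement (rows 4–7); matrix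
`2p + 1` is the same with the last of each four columns negated. -/
def muwmFourteen : Fin 14 → Matrix (Fin 8) (Fin 8) ℤ :=
  ![
    ![![1, 0, 1, 0, 1, 0, 1, 0], ![1, 0, 1, 0, -1, 0, -1, 0], ![1, 0, -1, 0, 1, 0, -1, 0], ![1, 0, -1, 0, -1, 0, 1, 0], ![0, 1, 0, 1, 0, 1, 0, 1], ![0, 1, 0, 1, 0, -1, 0, -1], ![0, 1, 0, -1, 0, 1, 0, -1], ![0, 1, 0, -1, 0, -1, 0, 1]],
    ![![1, 0, 1, 0, 1, 0, -1, 0], ![1, 0, 1, 0, -1, 0, 1, 0], ![1, 0, -1, 0, 1, 0, 1, 0], ![1, 0, -1, 0, -1, 0, -1, 0], ![0, 1, 0, 1, 0, 1, 0, -1], ![0, 1, 0, 1, 0, -1, 0, 1], ![0, 1, 0, -1, 0, 1, 0, 1], ![0, 1, 0, -1, 0, -1, 0, -1]],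
    ![![1, 1, 0, 0, 1, 1, 0, 0], ![1, 1, 0, 0, -1, -1, 0, 0], ![1, -1, 0, 0, 1, -1, 0, 0], ![1, -1, 0, 0, -1, 1, 0, 0], ![0, 0, 1, 1, 0, 0, 1, 1], ![0, 0, 1, 1, 0, 0, -1, -1], ![0, 0, 1, -1, 0, 0, 1, -1], ![0, 0, 1, -1, 0, 0, -1, 1]],
    ![![1, 1, 0, 0, 1, -1, 0, 0], ![1, 1, 0, 0, -1, 1, 0, 0], ![1, -1, 0, 0, 1, 1, 0, 0], ![1, -1, 0, 0, -1, -1, 0, 0], ![0, 0, 1, 1, 0, 0, 1, -1], ![0, 0, 1, 1, 0, 0, -1, 1], ![0, 0, 1, -1, 0, 0, 1, 1], ![0, 0, 1, -1, 0, 0, -1, -1]],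
    ![![1, 0, 0, 1, 1, 0, 0, 1], ![1, 0, 0, 1, -1, 0, 0, -1], ![1, 0, 0, -1, 1, 0, 0, -1], ![1, 0, 0, -1, -1, 0, 0, 1], ![0, 1, 1, 0, 0, 1, 1, 0], ![0, 1, 1, 0, 0, -1, -1, 0], ![0, 1, -1, 0, 0, 1, -1, 0], ![0, 1, -1, 0, 0, -1, 1, 0]],
    ![![1, 0, 0, 1, 1, 0, 0, -1], ![1, 0, 0, 1, -1, 0, 0, 1], ![1, 0, 0, -1, 1, 0, 0, 1], ![1, 0, 0, -1, -1, 0, 0, -1], ![0, 1, 1, 0, 0, 1, -1, 0], ![0, 1, 1, 0, 0, -1, 1, 0], ![0, 1, -1, 0, 0, 1, 1, 0], ![0, 1, -1, 0, 0, -1, -1, 0]],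
    ![![1, 1, 1, 1, 0, 0, 0, 0], ![1, 1, -1, -1, 0, 0, 0, 0], ![1, -1, 1, -1, 0, 0, 0, 0], ![1, -1, -1, 1, 0, 0, 0, 0], ![0, 0, 0, 0, 1, 1, 1, 1], ![0, 0, 0, 0, 1, 1, -1, -1], ![0, 0, 0, 0, 1, -1, 1, -1], ![0, 0, 0, 0, 1, -1, -1, 1]],
    ![![1, 1, 1, -1, 0, 0, 0, 0], ![1, 1, -1, 1, 0, 0, 0, 0], ![1, -1, 1, 1, 0, 0, 0, 0], ![1, -1, -1, -1, 0, 0, 0, 0], ![0, 0, 0, 0, 1, 1, 1, -1], ![0, 0, 0, 0, 1, 1, -1, 1], ![0, 0, 0, 0, 1, -1, 1, 1], ![0, 0, 0, 0, 1, -1, -1, -1]],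
    ![![1, 0, 1, 0, 0, 1, 0, 1], ![1, 0, 1, 0, 0, -1, 0, -1], ![1, 0, -1, 0, 0, 1, 0, -1], ![1, 0, -1, 0, 0, -1, 0, 1], ![0, 1, 0, 1, 1, 0, 1, 0], ![0, 1, 0, 1, -1, 0, -1, 0], ![0, 1, 0, -1, 1, 0, -1, 0], ![0, 1, 0, -1, -1, 0, 1, 0]],
    ![![1, 0, 1, 0, 0, 1, 0, -1], ![1, 0, 1, 0, 0, -1, 0, 1], ![1, 0, -1, 0, 0, 1, 0, 1], ![1, 0, -1, 0, 0, -1, 0, -1], ![0, 1, 0, 1, 1, 0, -1, 0], ![0, 1, 0, 1, -1, 0, 1, 0], ![0, 1, 0, -1, 1, 0, 1, 0], ![0, 1, 0, -1, -1, 0, -1, 0]],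
    ![![1, 1, 0, 0, 0, 0, 1, 1], ![1, 1, 0, 0, 0, 0, -1, -1], ![1, -1, 0, 0, 0, 0, 1, -1], ![1, -1, 0, 0, 0, 0, -1, 1], ![0, 0, 1, 1, 1, 1, 0, 0], ![0, 0, 1, 1, -1, -1, 0, 0], ![0, 0, 1, -1, 1, -1, 0, 0], ![0, 0, 1, -1, -1, 1, 0, 0]],
    ![![1, 1, 0, 0, 0, 0, 1, -1], ![1, 1, 0, 0, 0, 0, -1, 1], ![1, -1, 0, 0, 0, 0, 1, 1], ![1, -1, 0, 0, 0, 0, -1, -1], ![0, 0, 1, 1, 1, -1, 0, 0], ![0, 0, 1, 1, -1, 1, 0, 0], ![0, 0, 1, -1, 1, 1, 0, 0], ![0, 0, 1, -1, -1, -1, 0, 0]],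
    ![![1, 0, 0, 1, 0, 1, 1, 0], ![1, 0, 0, 1, 0, -1, -1, 0], ![1, 0, 0, -1, 0, 1, -1, 0], ![1, 0, 0, -1, 0, -1, 1, 0], ![0, 1, 1, 0, 1, 0, 0, 1], ![0, 1, 1, 0, -1, 0, 0, -1], ![0, 1, -1, 0, 1, 0, 0, -1], ![0, 1, -1, 0, -1, 0, 0, 1]],
    ![![1, 0, 0, 1, 0, 1, -1, 0], ![1, 0, 0, 1, 0, -1, 1, 0], ![1, 0, 0, -1, 0, 1, 1, 0], ![1, 0, 0, -1, 0, -1, -1, 0], ![0, 1, 1, 0, 1, 0, 0, -1], ![0, 1, 1, 0, -1, 0, 0, 1], ![0, 1, -1, 0, 1, 0, 0, 1], ![0, 1, -1, 0, -1, 0, 0, -1]]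
  ]

theorem muwmFourteen_isTernary (a : Fin 14) (i j : Fin 8) :
    IsTernary (muwmFourteen a i j) := by
  -- stated over pairs: instance search finds no `Decidable (∀ i j, P (M i j))` for a matrix `M`
  have h : ∀ a, ∀ p : Fin 8 × Fin 8, IsTernary (muwmFourteen a p.1 p.2) := by decide +kernel
  exact h a (i, j)

theorem muwmFourteen_mul_transpose_self : ∀ a, muwmFourteen a * (muwmFourteen a)ᵀ = 4 • 1 := by
  decide +kernel

theorem muwmFourteen_mul_transpose_mem : ∀ a b, a ≠ b → ∀ i j,
    (muwmFourteen a * (muwmFourteen b)ᵀ) i j ∈ ({-2, 0, 2} : Finset ℤ) := by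
  decide +kernel

/-- the maximum size of a set of mutually unbiased weighing matrices of
order `8` and weight `4` is `14`. -/
theorem stmt15 :
    (∃ W : Fin 14 → Matrix (Fin 8) (Fin 8) ℝ, MUWM (4 : ℝ) W) ∧
    ¬∃ W : Fin 15 → Matrix (Fin 8) (Fin 8) ℝ, MUWM (4 : ℝ) W :=
  ⟨⟨_, (muwm_map_intCast_iff muwmFourteen_isTernary).2
      ⟨muwmFourteen_mul_transpose_self, muwmFourteen_mul_transpose_mem⟩⟩,
    fun ⟨_, hW⟩ => absurd hW.le_fourteen (by norm_num)⟩
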